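/- Let ω > 0, γ, D_qq, D_pq be real, D_pp > 0, Δ := D_pp D_qq − D_pq² − γ²/4 ≥ 0, and let V : ℝ → ℝ be continuous. Define on C_c^∞(ℝ,ℂ) the operator G u = −(D_qq + i/2) p² u − (D_pp + iω²/2) q² u + (D_pq − iγ/2)(pq + qp) u + (γ/2) u − i V(q) u, and the Lindblad operators L₁ = ((−2D_pq + iγ)/√(2D_pp)) p + √(2D_pp) q, L₂ = (2√Δ/√(2D_pp)) p. Then for every u ∈ C_c^∞(ℝ,ℂ): Re ⟨u, G u⟩ = −(1/2)( ‖L₁ u‖² + ‖L₂ u‖² ) ≤ 0, i.e. G is dissipative on C_c^∞(ℝ,ℂ). -/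

import Mathlib

open MeasureTheory Complex
open scoped ComplexOrder

noncomputable section

/-- Operators acting on complex-valued functions on `ℝ`. -/
abbrev Op : Type := (ℝ → ℂ) → (ℝ → ℂ)

/-- The momentum operator `(p u)(x) = -i u'(x)`. -/
def pOp : Op := fun u x => -Complex.I * deriv u x

/-- The position operator `(q u)(x) = x * u(x)`. -/
def qOp : Op := fun u x => (x : ℂ) * u x

/-- Multiplication operator by a real-valued function. -/
def mulOp (f : ℝ → ℝ) : Op := fun u x => (f x : ℂ) * u x

/-- Commutator of two operators. -/
def opComm (A B : Op) : Op := fun u => A (B u) - B (A u)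

/-- Anticommutator of two operators. -/
def opACom (A B : Op) : Op := fun u => A (B u) + B (A u)

/-- The `L²(ℝ,ℂ)` inner product, antilinear in the first argument. -/
def ip (u v : ℝ → ℂ) : ℂ := ∫ x : ℝ, (starRingEnd ℂ) (u x) * v x

/-- `u ∈ C_c^∞(ℝ,ℂ)`: smooth and compactly supported. -/
def IsTest (u : ℝ → ℂ) : Prop := ContDiff ℝ (⊤ : ℕ∞) u ∧ HasCompactSupport u

/-- The first Lindblad operator `L₁ = ((−2D_pq + iγ)/√(2D_pp)) p + √(2D_pp) q`. -/
def L1op (γ Dpp Dpq : ℝ) : Op :=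
  ((((-2*Dpq : ℝ) : ℂ) + Complex.I * (γ : ℂ)) / ((Real.sqrt (2*Dpp) : ℝ) : ℂ)) • pOp
  + ((Real.sqrt (2*Dpp) : ℝ) : ℂ) • qOp

/-- The second Lindblad operator `L₂ = (2√Δ/√(2D_pp)) p`, `Δ = D_pp D_qq − D_pq² − γ²/4`. -/
def L2op (γ Dpp Dqq Dpq : ℝ) : Op :=
  ((2 * Real.sqrt (Dpp*Dqq - Dpq^2 - γ^2/4) / Real.sqrt (2*Dpp) : ℝ) : ℂ) • pOp

/-- `G u = −(D_qq + i/2) p² u − (D_pp + iω²/2) q² u + (D_pq − iγ/2)(pq+qp) u + (γ/2) u − i V(q) u`. -/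
def Gop (ω γ Dpp Dqq Dpq : ℝ) (V : ℝ → ℝ) : Op := fun u =>
  (-((Dqq : ℂ) + Complex.I/2)) • pOp (pOp u)
  - ((Dpp : ℂ) + Complex.I * ((ω^2 : ℝ) : ℂ)/2) • qOp (qOp u)
  + ((Dpq : ℂ) - Complex.I * (γ : ℂ)/2) • opACom pOp qOp u
  + ((γ/2 : ℝ) : ℂ) • u
  - Complex.I • mulOp V u

/-! Writing `P = ‖p u‖²`, `Q = ‖q u‖²`, `N = ‖u‖²` and `C = ⟨p u, q u⟩`, the symmetry of `p`
(integration by parts) and of `q` give `Re ⟨u, G u⟩ = -D_qq P - D_pp Q + 2 D_pq Re C + (γ/2) N`,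
the potential contributing only to the imaginary part. Expanding `‖L₁ u‖²` also produces `Im C`,
which the canonical commutation relation `[p, q] = -i` pins down to `-N/2`; the coefficients of
`P` in `‖L₁ u‖²` and `‖L₂ u‖²` then add up to `2 D_qq` precisely because of the definition of `Δ`. -/

section InnerProduct

variable {u v f g : ℝ → ℂ}

lemma integrable_conj_mul (hu : Continuous u) (hsu : HasCompactSupport u) (hf : Continuous f) :
    Integrable (fun x => starRingEnd ℂ (u x) * f x) :=
  ((continuous_conj.comp hu).mul hf).integrable_of_hasCompactSupport
    (hsu.comp_left (map_zero _)).mul_right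

lemma conj_ip (u v : ℝ → ℂ) : starRingEnd ℂ (ip u v) = ip v u := by
  rw [ip, ip, ← integral_conj]
  congr 1 with x
  simp [mul_comm]

lemma ip_smul_right (u : ℝ → ℂ) (c : ℂ) (f : ℝ → ℂ) : ip u (c • f) = c * ip u f := by
  rw [ip, ip, ← integral_const_mul]
  congr 1 with x
  simp only [Pi.smul_apply, smul_eq_mul]
  ring

lemma ip_smul_left (c : ℂ) (u f : ℝ → ℂ) : ip (c • u) f = starRingEnd ℂ c * ip u f := by
  rw [← conj_ip, ip_smul_right, map_mul, conj_ip]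

lemma ip_add_right (hu : Continuous u) (hsu : HasCompactSupport u) (hf : Continuous f)
    (hg : Continuous g) : ip u (f + g) = ip u f + ip u g := by
  simp only [ip, Pi.add_apply, mul_add]
  exact integral_add (integrable_conj_mul hu hsu hf) (integrable_conj_mul hu hsu hg)

lemma ip_sub_right (hu : Continuous u) (hsu : HasCompactSupport u) (hf : Continuous f)
    (hg : Continuous g) : ip u (f - g) = ip u f - ip u g := by
  simp only [ip, Pi.sub_apply, mul_sub]
  exact integral_sub (integrable_conj_mul hu hsu hf) (integrable_conj_mul hu hsu hg)

lemma ip_add_left (hf : Continuous f) (hg : Continuous g) (hv : Continuous v)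
    (hsv : HasCompactSupport v) : ip (f + g) v = ip f v + ip g v := by
  rw [← conj_ip, ip_add_right hv hsv hf hg, map_add, conj_ip, conj_ip]

lemma ip_mulOp_self (V : ℝ → ℝ) (u : ℝ → ℂ) :
    ip u (mulOp V u) = ((∫ x, V x * normSq (u x) : ℝ) : ℂ) := by
  calc ip u (mulOp V u) = ∫ x, ((V x * normSq (u x) : ℝ) : ℂ) := by
        rw [ip]
        congr 1 with x
        simp only [mulOp, ofReal_mul, ← mul_conj]
        ring
    _ = _ := integral_ofReal

lemma im_ip_mulOp_self (V : ℝ → ℝ) (u : ℝ → ℂ) : (ip u (mulOp V u)).im = 0 := by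
  rw [ip_mulOp_self, ofReal_im]

lemma ip_self (u : ℝ → ℂ) : ip u u = ((∫ x, normSq (u x) : ℝ) : ℂ) := by
  simpa [show mulOp 1 u = u by ext; simp [mulOp]] using ip_mulOp_self 1 u

lemma im_ip_self (u : ℝ → ℂ) : (ip u u).im = 0 := by
  rw [ip_self, ofReal_im]

lemma re_ip_self_nonneg (u : ℝ → ℂ) : 0 ≤ (ip u u).re := by
  rw [ip_self, ofReal_re]
  exact integral_nonneg fun x => normSq_nonneg _

lemma re_ip_smul_self (c : ℂ) (f : ℝ → ℂ) :
    (ip (c • f) (c • f)).re = normSq c * (ip f f).re := by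
  rw [ip_smul_left, ip_smul_right, ← mul_assoc, normSq_eq_conj_mul_self.symm, re_ofReal_mul]

lemma re_ip_add_smul_self (a b : ℂ) (hf : Continuous f) (hsf : HasCompactSupport f)
    (hg : Continuous g) (hsg : HasCompactSupport g) :
    (ip (a • f + b • g) (a • f + b • g)).re
      = normSq a * (ip f f).re + normSq b * (ip g g).re
        + 2 * (starRingEnd ℂ a * b * ip f g).re := by
  have haf := hf.const_smul a
  have hbg := hg.const_smul b
  rw [ip_add_left haf hbg (haf.add hbg) (hsf.smul_left.add hsg.smul_left),
    ip_add_right haf hsf.smul_left haf hbg, ip_add_right hbg hsg.smul_left haf hbg]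
  simp only [ip_smul_left, ip_smul_right, ← conj_ip f g]
  simp only [add_re, mul_re, mul_im, conj_re, conj_im, im_ip_self, normSq_apply]
  ring

end InnerProduct

section PositionMomentum

variable {u v : ℝ → ℂ}

lemma IsTest.continuous (hu : IsTest u) : Continuous u := hu.1.continuous

lemma IsTest.differentiable (hu : IsTest u) : Differentiable ℝ u :=
  hu.1.differentiable (by norm_num)

lemma IsTest.pOp (hu : IsTest u) : IsTest (pOp u) :=
  ⟨contDiff_const.mul (contDiff_infty_iff_deriv.mp hu.1).2, hu.2.deriv.mul_left⟩

lemma IsTest.qOp (hu : IsTest u) : IsTest (qOp u) :=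
  ⟨ofRealCLM.contDiff.mul hu.1, hu.2.mul_left⟩

lemma pOp_symm (hu : IsTest u) (hv : IsTest v) : ip (pOp u) v = ip u (pOp v) := by
  have hu' : Continuous (deriv u) := (contDiff_infty_iff_deriv.mp hu.1).2.continuous
  have hv' : Continuous (deriv v) := (contDiff_infty_iff_deriv.mp hv.1).2.continuous
  have ibp : ∫ x, starRingEnd ℂ (u x) * deriv v x = -∫ x, starRingEnd ℂ (deriv u x) * v x :=
    integral_mul_deriv_eq_deriv_mul_of_integrable
      (fun x _ => (hu.differentiable x).hasDerivAt.star)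
      (fun x _ => (hv.differentiable x).hasDerivAt)
      (integrable_conj_mul hu.continuous hu.2 hv')
      (integrable_conj_mul hu' hu.2.deriv hv.continuous)
      (integrable_conj_mul hu.continuous hu.2 hv.continuous)
  have hl : ip (pOp u) v = I * ∫ x, starRingEnd ℂ (deriv u x) * v x := by
    rw [ip, ← integral_const_mul]
    congr 1 with x
    simp [pOp]
    ring
  have hr : ip u (pOp v) = -I * ∫ x, starRingEnd ℂ (u x) * deriv v x := by
    rw [ip, ← integral_const_mul]
    congr 1 with x
    simp [pOp]
    ring
  rw [hl, hr, ibp]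
  ring

lemma qOp_symm (u v : ℝ → ℂ) : ip (qOp u) v = ip u (qOp v) := by
  simp only [ip, qOp, map_mul, conj_ofReal, mul_assoc, mul_left_comm (starRingEnd ℂ _)]

lemma opComm_pOp_qOp (hu : Differentiable ℝ u) : opComm pOp qOp u = -I • u := by
  ext x
  have hx : HasDerivAt (fun y : ℝ => (y : ℂ)) 1 x := by
    simpa using (hasDerivAt_id x).ofReal_comp
  have hq : HasDerivAt (qOp u) (1 * u x + x * deriv u x) x := hx.mul (hu x).hasDerivAt
  simp only [opComm, pOp, Pi.sub_apply, Pi.smul_apply, smul_eq_mul, hq.deriv]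
  simp only [qOp, pOp]
  ring

lemma im_ip_pOp_qOp (hu : IsTest u) : (ip (pOp u) (qOp u)).im = -(ip u u).re / 2 := by
  have hcomm :
      ip u (opComm pOp qOp u) = ip (pOp u) (qOp u) - starRingEnd ℂ (ip (pOp u) (qOp u)) := by
    rw [opComm, ip_sub_right hu.continuous hu.2 hu.qOp.pOp.continuous hu.pOp.qOp.continuous,
      ← pOp_symm hu hu.qOp, ← qOp_symm u (pOp u), conj_ip]
  rw [opComm_pOp_qOp hu.differentiable, ip_smul_right, sub_conj] at hcomm
  have him := congrArg im hcomm
  simp only [mul_im, neg_re, neg_im, I_re, I_im, ofReal_re, ofReal_im, im_ip_self] at him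
  linarith

lemma ip_opACom_pOp_qOp (hu : IsTest u) :
    ip u (opACom pOp qOp u) = ((2 * (ip (pOp u) (qOp u)).re : ℝ) : ℂ) := by
  rw [opACom, ip_add_right hu.continuous hu.2 hu.qOp.pOp.continuous hu.pOp.qOp.continuous,
    ← pOp_symm hu hu.qOp, ← qOp_symm u (pOp u), ← conj_ip (pOp u), add_conj]

end PositionMomentum

lemma re_ip_Gop (ω γ Dpp Dqq Dpq : ℝ) {V : ℝ → ℝ} (hV : Continuous V) {u : ℝ → ℂ}
    (hu : IsTest u) :
    (ip u (Gop ω γ Dpp Dqq Dpq V u)).re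
      = -Dqq * (ip (pOp u) (pOp u)).re - Dpp * (ip (qOp u) (qOp u)).re
        + 2 * Dpq * (ip (pOp u) (qOp u)).re + γ / 2 * (ip u u).re := by
  have hp2 := hu.pOp.pOp.continuous
  have hq2 := hu.qOp.qOp.continuous
  have hpq : Continuous (opACom pOp qOp u) := hu.qOp.pOp.continuous.add hu.pOp.qOp.continuous
  have hVu : Continuous (mulOp V u) := (continuous_ofReal.comp hV).mul hu.continuous
  have hu' := hu.continuous
  rw [Gop, ip_sub_right hu' hu.2 (by fun_prop) (by fun_prop),
    ip_add_right hu' hu.2 (by fun_prop) (by fun_prop),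
    ip_add_right hu' hu.2 (by fun_prop) (by fun_prop),
    ip_sub_right hu' hu.2 (by fun_prop) (by fun_prop)]
  simp only [ip_smul_right, ← pOp_symm hu hu.pOp, ← qOp_symm u (qOp u), ip_opACom_pOp_qOp hu]
  simp only [add_re, sub_re, mul_re, mul_im, neg_re, neg_im, add_im, sub_im, div_ofNat_re,
    div_ofNat_im, I_re, I_im, ofReal_re, ofReal_im, im_ip_self, im_ip_mulOp_self]
  ring

lemma re_ip_L1op_self (γ Dpq : ℝ) {Dpp : ℝ} (hpp : 0 < Dpp) {u : ℝ → ℂ} (hu : IsTest u) :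
    (ip (L1op γ Dpp Dpq u) (L1op γ Dpp Dpq u)).re
      = (4 * Dpq ^ 2 + γ ^ 2) / (2 * Dpp) * (ip (pOp u) (pOp u)).re
        + 2 * Dpp * (ip (qOp u) (qOp u)).re
        - 4 * Dpq * (ip (pOp u) (qOp u)).re - γ * (ip u u).re := by
  rw [L1op, Pi.add_apply, Pi.smul_apply, Pi.smul_apply,
    re_ip_add_smul_self _ _ hu.pOp.continuous hu.pOp.2 hu.qOp.continuous hu.qOp.2]
  have hs : Real.sqrt (2 * Dpp) * Real.sqrt (2 * Dpp) = 2 * Dpp :=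
    Real.mul_self_sqrt (by linarith)
  have hs0 : ((Real.sqrt (2 * Dpp) : ℝ) : ℂ) ≠ 0 := ofReal_ne_zero.mpr (by positivity)
  have ha :
      normSq ((((-2 * Dpq : ℝ) : ℂ) + I * γ) / ((Real.sqrt (2 * Dpp) : ℝ) : ℂ))
        = (4 * Dpq ^ 2 + γ ^ 2) / (2 * Dpp) := by
    rw [normSq_div, normSq_ofReal, hs, mul_comm I, normSq_add_mul_I]
    ring
  have hab :
      starRingEnd ℂ ((((-2 * Dpq : ℝ) : ℂ) + I * γ) / ((Real.sqrt (2 * Dpp) : ℝ) : ℂ))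
        * ((Real.sqrt (2 * Dpp) : ℝ) : ℂ) = ((-2 * Dpq : ℝ) : ℂ) - I * γ := by
    rw [map_div₀, conj_ofReal, div_mul_cancel₀ _ hs0, map_add, map_mul, conj_ofReal,
      conj_ofReal, conj_I]
    ring
  rw [ha, normSq_ofReal, hs, hab]
  simp only [mul_re, mul_im, sub_re, sub_im, ofReal_re, ofReal_im, I_re, I_im, im_ip_pOp_qOp hu]
  ring

lemma re_ip_L2op_self (γ Dqq Dpq : ℝ) {Dpp : ℝ} (hpp : 0 ≤ Dpp)
    (hΔ : 0 ≤ Dpp*Dqq - Dpq^2 - γ^2/4) (u : ℝ → ℂ) :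
    (ip (L2op γ Dpp Dqq Dpq u) (L2op γ Dpp Dqq Dpq u)).re
      = 2 * (Dpp*Dqq - Dpq^2 - γ^2/4) / Dpp * (ip (pOp u) (pOp u)).re := by
  rw [L2op, Pi.smul_apply, re_ip_smul_self, normSq_ofReal, div_mul_div_comm,
    mul_mul_mul_comm, Real.mul_self_sqrt hΔ, Real.mul_self_sqrt (by linarith)]
  ring

theorem G_dissipative_general (ω γ Dpp Dqq Dpq : ℝ) (hpp : 0 < Dpp)
    (hΔ : 0 ≤ Dpp*Dqq - Dpq^2 - γ^2/4) (V : ℝ → ℝ) (hV : Continuous V)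
    (u : ℝ → ℂ) (hu : IsTest u) :
    (ip u (Gop ω γ Dpp Dqq Dpq V u)).re
      = -(1/2) * ((ip (L1op γ Dpp Dpq u) (L1op γ Dpp Dpq u)).re
          + (ip (L2op γ Dpp Dqq Dpq u) (L2op γ Dpp Dqq Dpq u)).re)
    ∧ (ip u (Gop ω γ Dpp Dqq Dpq V u)).re ≤ 0 := by
  have hbalance : (ip u (Gop ω γ Dpp Dqq Dpq V u)).re
      = -(1/2) * ((ip (L1op γ Dpp Dpq u) (L1op γ Dpp Dpq u)).re
          + (ip (L2op γ Dpp Dqq Dpq u) (L2op γ Dpp Dqq Dpq u)).re) := by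
    rw [re_ip_Gop ω γ Dpp Dqq Dpq hV hu, re_ip_L1op_self γ Dpq hpp hu,
      re_ip_L2op_self γ Dqq Dpq hpp.le hΔ u]
    field_simp
    ring
  refine ⟨hbalance, ?_⟩
  rw [hbalance]
  linarith [re_ip_self_nonneg (L1op γ Dpp Dpq u), re_ip_self_nonneg (L2op γ Dpp Dqq Dpq u)]

/-- `Re ⟨u, G u⟩ = −(1/2)(‖L₁u‖² + ‖L₂u‖²) ≤ 0`, i.e. `G` is dissipative
on `C_c^∞(ℝ,ℂ)`. -/
theorem G_dissipative (ω γ Dpp Dqq Dpq : ℝ) (hω : 0 < ω) (hpp : 0 < Dpp)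
    (hΔ : 0 ≤ Dpp*Dqq - Dpq^2 - γ^2/4) (V : ℝ → ℝ) (hV : Continuous V)
    (u : ℝ → ℂ) (hu : IsTest u) :
    (ip u (Gop ω γ Dpp Dqq Dpq V u)).re
      = -(1/2) * ((ip (L1op γ Dpp Dpq u) (L1op γ Dpp Dpq u)).re
          + (ip (L2op γ Dpp Dqq Dpq u) (L2op γ Dpp Dqq Dpq u)).re)
    ∧ (ip u (Gop ω γ Dpp Dqq Dpq V u)).re ≤ 0 :=
  G_dissipative_general ω γ Dpp Dqq Dpq hpp hΔ V hV u hu
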